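/- arXiv:2103.07830 — 2 statements merged into one kernel-verified Lean document; each statement's English description precedes it below -/
import Mathlib

section
/- For any three discrete random variables A, B, C on a finite probability space such that B and C are independent, the conditional entropies satisfy H(A|B) + H(A|C) ≥ H(A) + H(A|B,C). -/
open Finset

/-- Probability of the event `X = k` for a weight function `p` on a finite space. -/
noncomputable def probOf {Ω κ : Type*} [Fintype Ω] [DecidableEq κ]
    (p : Ω → ℝ) (X : Ω → κ) (k : κ) : ℝ :=
  ∑ ω ∈ Finset.univ.filter (fun ω => X ω = k), p ω

/-- Shannon entropy of a discrete random variable `X` on a finite probability space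
with weights `p`. -/
noncomputable def shannonH {Ω κ : Type*} [Fintype Ω] [Fintype κ] [DecidableEq κ]
    (p : Ω → ℝ) (X : Ω → κ) : ℝ :=
  - ∑ k : κ, probOf p X k * Real.log (probOf p X k)

/-- Conditional entropy H(A|B) = H(A,B) - H(B). -/
noncomputable def condH {Ω κ₁ κ₂ : Type*} [Fintype Ω] [Fintype κ₁] [Fintype κ₂]
    [DecidableEq κ₁] [DecidableEq κ₂] (p : Ω → ℝ) (A : Ω → κ₁) (B : Ω → κ₂) : ℝ :=
  shannonH p (fun ω => (A ω, B ω)) - shannonH p B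

/-!
Independence gives H(B,C) = H(B) + H(C), so the claim is the submodularity
H(A) + H(A,B,C) ≤ H(A,B) + H(A,C), i.e. I(B;C|A) ≥ 0. This is Gibbs' inequality: for
r(a,b,c) = P(a,b) P(a,c) / (P(a) P(a,b,c)), the bound log r ≤ r - 1 gives
H(A) + H(A,B,C) - H(A,B) - H(A,C) = E[log r] ≤ E[r] - 1, and
E[r] ≤ ∑_{a,b,c} P(a,b) P(a,c) / P(a) = ∑_a P(a) = 1.
-/

open Real

section probOf

variable {Ω κ : Type*} [Fintype Ω] [DecidableEq κ] (p : Ω → ℝ)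

theorem probOf_nonneg (hp0 : ∀ ω, 0 ≤ p ω) (X : Ω → κ) (k : κ) : 0 ≤ probOf p X k :=
  sum_nonneg fun ω _ => hp0 ω

theorem probOf_apply_pos (hp0 : ∀ ω, 0 ≤ p ω) (X : Ω → κ) {ω : Ω} (hω : 0 < p ω) :
    0 < probOf p X (X ω) :=
  hω.trans_le <| single_le_sum (fun i _ => hp0 i) (mem_filter.2 ⟨mem_univ ω, rfl⟩)

theorem sum_probOf_mul [Fintype κ] (X : Ω → κ) (f : κ → ℝ) :
    ∑ k, probOf p X k * f k = ∑ ω, p ω * f (X ω) := by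
  simp only [probOf, sum_mul, sum_filter]
  rw [sum_comm]
  exact sum_congr rfl fun ω _ => by simp

theorem sum_probOf [Fintype κ] (X : Ω → κ) : ∑ k, probOf p X k = ∑ ω, p ω := by
  simpa using sum_probOf_mul p X 1

theorem sum_probOf_prodMk_right {κ' : Type*} [Fintype κ'] [DecidableEq κ'] (X : Ω → κ)
    (Y : Ω → κ') (x : κ) : ∑ y, probOf p (fun ω => (X ω, Y ω)) (x, y) = probOf p X x := by
  simp only [probOf, sum_filter]
  rw [sum_comm]
  refine sum_congr rfl fun ω _ => ?_
  by_cases h : X ω = x <;> simp [Prod.ext_iff, h]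

end probOf

section shannonH

variable {Ω : Type*} [Fintype Ω] (p : Ω → ℝ)

theorem shannonH_eq_sum_negMulLog {κ : Type*} [Fintype κ] [DecidableEq κ] (X : Ω → κ) :
    shannonH p X = ∑ k, negMulLog (probOf p X k) := by
  simp [shannonH, negMulLog]

theorem shannonH_eq_neg_sum_mul_log {κ : Type*} [Fintype κ] [DecidableEq κ] (X : Ω → κ) :
    shannonH p X = -∑ ω, p ω * log (probOf p X (X ω)) := by
  rw [shannonH, sum_probOf_mul p X fun k => log (probOf p X k)]

variable {α β γ : Type*} [Fintype α] [Fintype β] [Fintype γ]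
  [DecidableEq α] [DecidableEq β] [DecidableEq γ]

theorem shannonH_prodMk_of_indep (hp1 : ∑ ω, p ω = 1) (B : Ω → β) (C : Ω → γ)
    (hindep : ∀ b c, probOf p (fun ω => (B ω, C ω)) (b, c) = probOf p B b * probOf p C c) :
    shannonH p (fun ω => (B ω, C ω)) = shannonH p B + shannonH p C := by
  simp only [shannonH_eq_sum_negMulLog, Fintype.sum_prod_type, hindep, negMulLog_mul,
    sum_add_distrib, ← mul_sum, ← sum_mul, sum_probOf, hp1, one_mul]

theorem sum_probOf_mul_ratio_le (hp0 : ∀ ω, 0 ≤ p ω) (A : Ω → α) (B : Ω → β) (C : Ω → γ) :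
    ∑ t, probOf p (fun ω => (A ω, B ω, C ω)) t *
        (probOf p (fun ω => (A ω, B ω)) (t.1, t.2.1) *
          probOf p (fun ω => (A ω, C ω)) (t.1, t.2.2) /
            (probOf p A t.1 * probOf p (fun ω => (A ω, B ω, C ω)) t)) ≤
      ∑ ω, p ω := by
  set pABC := probOf p (fun ω => (A ω, B ω, C ω))
  set pAB := probOf p (fun ω => (A ω, B ω))
  set pAC := probOf p (fun ω => (A ω, C ω))
  have cancel (t : α × β × γ) :
      pABC t * (pAB (t.1, t.2.1) * pAC (t.1, t.2.2) / (probOf p A t.1 * pABC t)) ≤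
        pAB (t.1, t.2.1) * pAC (t.1, t.2.2) / probOf p A t.1 := by
    rcases (show 0 ≤ pABC t from probOf_nonneg p hp0 _ t).eq_or_lt with h | h
    · rw [← h, zero_mul]
      exact div_nonneg (mul_nonneg (probOf_nonneg p hp0 _ _) (probOf_nonneg p hp0 _ _))
        (probOf_nonneg p hp0 _ _)
    · rw [mul_div_assoc', mul_comm (pABC t), mul_div_mul_right _ _ h.ne']
  calc _ ≤ ∑ t : α × β × γ, pAB (t.1, t.2.1) * pAC (t.1, t.2.2) / probOf p A t.1 :=
        sum_le_sum fun t _ => cancel t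
    _ = ∑ a, (∑ b, pAB (a, b)) * (∑ c, pAC (a, c)) / probOf p A a := by
        simp only [Fintype.sum_prod_type, sum_mul_sum, sum_div]
    _ = ∑ a, probOf p A a := by
        simp only [pAB, pAC, sum_probOf_prodMk_right, mul_self_div_self]
    _ = ∑ ω, p ω := sum_probOf p A

theorem shannonH_add_shannonH_triple_le (hp0 : ∀ ω, 0 ≤ p ω) (A : Ω → α) (B : Ω → β)
    (C : Ω → γ) :
    shannonH p A + shannonH p (fun ω => (A ω, B ω, C ω)) ≤
      shannonH p (fun ω => (A ω, B ω)) + shannonH p (fun ω => (A ω, C ω)) := by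
  set pA := probOf p A
  set pAB := probOf p (fun ω => (A ω, B ω))
  set pAC := probOf p (fun ω => (A ω, C ω))
  set pABC := probOf p (fun ω => (A ω, B ω, C ω))
  set ratio : α × β × γ → ℝ := fun t =>
    pAB (t.1, t.2.1) * pAC (t.1, t.2.2) / (pA t.1 * pABC t)
  have gibbs (ω : Ω) :
      p ω * (log (pAB (A ω, B ω)) + log (pAC (A ω, C ω)) - log (pA (A ω)) -
        log (pABC (A ω, B ω, C ω))) ≤ p ω * (ratio (A ω, B ω, C ω) - 1) := by
    rcases (hp0 ω).eq_or_lt with hω | hω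
    · simp [← hω]
    have hA : 0 < pA (A ω) := probOf_apply_pos p hp0 A hω
    have hAB : 0 < pAB (A ω, B ω) := probOf_apply_pos p hp0 _ hω
    have hAC : 0 < pAC (A ω, C ω) := probOf_apply_pos p hp0 _ hω
    have hABC : 0 < pABC (A ω, B ω, C ω) := probOf_apply_pos p hp0 _ hω
    refine mul_le_mul_of_nonneg_left ?_ hω.le
    calc _ = log (ratio (A ω, B ω, C ω)) := by
          rw [log_div (by positivity) (by positivity), log_mul hAB.ne' hAC.ne',
            log_mul hA.ne' hABC.ne']
          ring
      _ ≤ _ := log_le_sub_one_of_pos (by positivity)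
  have mass : ∑ ω, p ω * ratio (A ω, B ω, C ω) ≤ ∑ ω, p ω := by
    rw [← sum_probOf_mul p (fun ω => (A ω, B ω, C ω)) ratio]
    exact sum_probOf_mul_ratio_le p hp0 A B C
  have total := sum_le_sum fun ω (_ : ω ∈ univ) => gibbs ω
  simp only [mul_sub, mul_add, mul_one, sum_add_distrib, sum_sub_distrib] at total
  simp only [shannonH_eq_neg_sum_mul_log]
  linarith

end shannonH

/-- For discrete random variables A, B, C on a finite probability space with B and C
independent, H(A|B) + H(A|C) ≥ H(A) + H(A|B,C). -/
theorem condH_add_condH_ge_of_indep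
    {Ω α β γ : Type*} [Fintype Ω] [Fintype α] [Fintype β] [Fintype γ]
    [DecidableEq α] [DecidableEq β] [DecidableEq γ]
    (p : Ω → ℝ) (hp0 : ∀ ω, 0 ≤ p ω) (hp1 : ∑ ω : Ω, p ω = 1)
    (A : Ω → α) (B : Ω → β) (C : Ω → γ)
    (hindep : ∀ (b : β) (c : γ),
      probOf p (fun ω => (B ω, C ω)) (b, c) = probOf p B b * probOf p C c) :
    condH p A B + condH p A C ≥
      shannonH p A + condH p A (fun ω => (B ω, C ω)) := by
  have h_indep := shannonH_prodMk_of_indep p hp1 B C hindep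
  have h_submod := shannonH_add_shannonH_triple_le p hp0 A B C
  simp only [condH]
  linarith
end

section
/- Let f_L(α) denote the weak-interference L-hop sum-GDoF: f_L(α) = 2 − α − α/(2^L − 1) for 0 ≤ α ≤ 1/2, f_L(α) = 1 + α − (1 − α)/(2^L − 1) for 1/2 ≤ α ≤ 2^L/(2^{L+1} − 1), and f_L(α) = 2 − α otherwise on [0,1]. Then for all α ∈ (0,1) and all L ≥ 2, f_{L+1}(α) ≥ f_L(α), i.e., the sum-GDoF is monotonically nondecreasing in the number of hops L in the weak interference regime. -/
/-- Sum-GDoF of the L-hop layered symmetric interference channel under finite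
precision CSIT, weak interference regime (Theorem 2). -/
noncomputable def fLhop (L : ℕ) (α : ℝ) : ℝ :=
  if α ≤ 1/2 then 2 - α - α / (2^L - 1)
  else if α ≤ 2^L / (2^(L+1) - 1) then 1 + α - (1 - α) / (2^L - 1)
  else 2 - α

/-- The sum-GDoF is monotonically nondecreasing in the number of hops L in the
weak interference regime: for α ∈ (0,1) and L ≥ 2, f_{L+1}(α) ≥ f_L(α). -/
theorem fLhop_mono_in_hops (α : ℝ) (hα0 : 0 < α) (hα1 : α < 1)
    (L : ℕ) (hL : 2 ≤ L) : fLhop L α ≤ fLhop (L+1) α := by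
  have hx : (4:ℝ) ≤ 2^L := by
    calc (4:ℝ) = 2^2 := by norm_num
    _ ≤ 2^L := by exact pow_le_pow_right₀ (by norm_num) hL
  set x : ℝ := 2^L with hxdef
  have h1 : (2:ℝ)^(L+1) = 2*x := by rw [pow_succ]; ring
  have h2 : (2:ℝ)^(L+1+1) = 4*x := by rw [pow_succ, pow_succ]; ring
  have hx1 : (0:ℝ) < x - 1 := by linarith
  have hx2 : (0:ℝ) < 2*x - 1 := by linarith
  have hx4 : (0:ℝ) < 4*x - 1 := by linarith
  unfold fLhop
  rw [h1, h2]
  split_ifs with c1 c2 c3 c3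
  · -- both first branch
    have : α / (2*x - 1) ≤ α / (x - 1) := by
      apply div_le_div_of_nonneg_left hα0.le hx1 (by linarith)
    linarith
  · -- ¬c1, c2, c3 : both middle
    have : (1 - α) / (2*x - 1) ≤ (1 - α) / (x - 1) := by
      apply div_le_div_of_nonneg_left (by linarith) hx1 (by linarith)
    linarith
  · -- ¬c1, c2, ¬c3 : middle vs last
    rw [le_div_iff₀ hx2] at c2
    have : 2*α - 1 ≤ (1 - α) / (x - 1) := by
      rw [le_div_iff₀ hx1]; nlinarith
    linarith
  · -- ¬c1, ¬c2, c3 : impossible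
    rw [le_div_iff₀ hx4] at c3
    rw [not_le, div_lt_iff₀ hx2] at c2
    nlinarith
  · exact le_refl _
end
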